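/- arXiv:2203.10549 — 6 statements merged into one kernel-verified Lean document; each statement's English description precedes it below -/
import Mathlib

section
/- Let A be a finite-dimensional self-injective k-algebra over a field k, and let X be a finitely generated A-module. Then the subspace P(X,X) of End_A(X) consisting of endomorphisms that factor through a projective module is contained in the Jacobson radical of End_A(X) if and only if X has no nonzero projective direct summand. -/
/-!
If `X ≃ P × Q` with `P ≠ 0` projective, the projection onto `P` is a nonzero idempotent of
`End_A(X)` factoring through `P`, and the Jacobson radical contains no nonzero idempotent.
Conversely, if `f` factors through a projective `P` but lies outside the radical, some `g = y f`
is not nilpotent. Since `X` has finite length, Fitting's lemma splits `X = ker gⁿ ⊕ im gⁿ` with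
`gⁿ` an automorphism of `im gⁿ ≠ 0`; as `gⁿ` still factors through `P`, the summand `im gⁿ` is a
retract of `P`, hence projective.
-/

open LinearMap

theorem IsIdempotentElem.eq_zero_of_mem_jacobson_bot {R : Type*} [Ring R] {e : R}
    (he : IsIdempotentElem e) (hJ : e ∈ Ideal.jacobson (⊥ : Ideal R)) : e = 0 := by
  obtain ⟨z, hz⟩ := Ideal.mem_jacobson_iff.mp hJ (-1)
  have hinv : z * (1 - e) = 1 := by
    rw [← sub_eq_zero, ← Ideal.mem_bot.mp hz]; noncomm_ring
  calc e = z * (1 - e) * e := by rw [hinv, one_mul]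
    _ = 0 := by rw [mul_assoc, sub_mul, one_mul, he.eq, sub_self, mul_zero]

theorem exists_not_isNilpotent_mul_of_notMem_jacobson_bot {R : Type*} [Ring R] {x : R}
    (hx : x ∉ Ideal.jacobson (⊥ : Ideal R)) : ∃ y, ¬IsNilpotent (y * x) := by
  contrapose! hx
  refine Ideal.mem_jacobson_iff.mpr fun y ↦ ?_
  obtain ⟨u, hu⟩ := (hx y).isUnit_add_one
  refine ⟨↑u⁻¹, Ideal.mem_bot.mpr ?_⟩
  rw [mul_assoc, ← mul_add_one (↑u⁻¹ : R), ← hu, Units.inv_mul, sub_self]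

section Modules

variable {R : Type*} [Ring R] {X P Y : Type*} [AddCommGroup X] [Module R X]
  [AddCommGroup P] [Module R P] [AddCommGroup Y] [Module R Y]

theorem subsingleton_of_comp_mem_jacobson_bot (α : X →ₗ[R] P) (β : P →ₗ[R] X)
    (hαβ : α ∘ₗ β = LinearMap.id) (hJ : β ∘ₗ α ∈ Ideal.jacobson (⊥ : Ideal (Module.End R X))) :
    Subsingleton P := by
  have hidem : IsIdempotentElem (β ∘ₗ α : Module.End R X) := by
    rw [IsIdempotentElem, Module.End.mul_eq_comp, comp_assoc, ← comp_assoc α, hαβ, id_comp]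
  have hzero := hidem.eq_zero_of_mem_jacobson_bot hJ
  refine ⟨fun p q ↦ ?_⟩
  have hid : α ∘ₗ (β ∘ₗ α) ∘ₗ β = LinearMap.id := by
    rw [comp_assoc β, hαβ, comp_id, hαβ]
  rw [hzero, zero_comp, comp_zero] at hid
  simpa [sub_eq_zero, eq_comm] using congr($hid (p - q))

theorem Module.Projective.of_bijective_comp [Module.Projective R P] (s : Y →ₗ[R] P)
    (r : P →ₗ[R] Y) (hrs : Function.Bijective (r ∘ₗ s)) : Module.Projective R Y :=
  .of_split s ((LinearEquiv.ofBijective _ hrs).symm.toLinearMap ∘ₗ r) <| by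
    rw [comp_assoc]
    exact (LinearEquiv.ofBijective _ hrs).symm_comp

theorem LinearMap.bijective_rangeRestrict_comp_subtype (h : Module.End R X)
    (hc : IsCompl (ker h) (range h)) :
    Function.Bijective (h.rangeRestrict ∘ₗ (range h).subtype) := by
  constructor
  · rw [← ker_eq_bot, eq_bot_iff]
    rintro ⟨x, hx⟩ hker
    have hhx : h x = 0 := congr_arg Subtype.val (mem_ker.mp hker)
    simpa using hc.disjoint.le_bot ⟨mem_ker.mpr hhx, hx⟩
  · rintro ⟨_, z, rfl⟩
    obtain ⟨a, ha, b, hb, rfl⟩ := Submodule.mem_sup.mp (hc.sup_eq_top ▸ Submodule.mem_top : z ∈ _)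
    exact ⟨⟨b, hb⟩, Subtype.ext (by simp [mem_ker.mp ha])⟩

theorem Module.Projective.range_of_isCompl_ker_range [Module.Projective R P]
    (h : Module.End R X) (hc : IsCompl (ker h) (range h)) (α : X →ₗ[R] P) (β : P →ₗ[R] X)
    (hh : h = β ∘ₗ α) : Module.Projective R (range h) := by
  refine .of_bijective_comp (α ∘ₗ (range h).subtype)
    ((range h).projectionOnto (ker h) hc.symm ∘ₗ β) ?_
  convert h.bijective_rangeRestrict_comp_subtype hc using 1
  ext x
  simp [← comp_apply β α, ← hh, Submodule.projectionOnto_apply_of_mem_left]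

theorem exists_isCompl_projective_of_not_isNilpotent [IsArtinian R X] [IsNoetherian R X]
    [Module.Projective R P] (α : X →ₗ[R] P) (β : P →ₗ[R] X)
    (hg : ¬IsNilpotent (β ∘ₗ α : Module.End R X)) :
    ∃ Y Z : Submodule R X, IsCompl Y Z ∧ Module.Projective R Y ∧ Nontrivial Y := by
  set g : Module.End R X := β ∘ₗ α
  obtain ⟨n, hc, hn⟩ :=
    (g.eventually_isCompl_ker_pow_range_pow.and (Filter.eventually_ge_atTop 1)).exists
  obtain ⟨m, rfl⟩ := Nat.exists_eq_add_of_le' hn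
  have hfactor : g ^ (m + 1) = ((g ^ m) ∘ₗ β) ∘ₗ α := by rw [pow_succ]; rfl
  refine ⟨range (g ^ (m + 1)), ker (g ^ (m + 1)), hc.symm,
    .range_of_isCompl_ker_range _ hc α _ hfactor, ?_⟩
  rw [Submodule.nontrivial_iff_ne_bot, Ne, range_eq_bot]
  exact fun h0 ↦ hg ⟨m + 1, h0⟩

end Modules

theorem stmt0_general (k A : Type) [Field k] [Ring A] [Algebra k A] [FiniteDimensional k A]
    (X : Type) [AddCommGroup X] [Module A X] [Module.Finite A X] :
    (∀ f : Module.End A X,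
      (∃ (P : Type) (_ : AddCommGroup P) (_ : Module A P), Module.Projective A P ∧
        ∃ (α : X →ₗ[A] P) (β : P →ₗ[A] X), (f : X →ₗ[A] X) = β ∘ₗ α) →
      f ∈ Ideal.jacobson (⊥ : Ideal (Module.End A X)))
    ↔ ¬ ∃ (P Q : Type) (_ : AddCommGroup P) (_ : Module A P)
          (_ : AddCommGroup Q) (_ : Module A Q),
        Module.Projective A P ∧ Nontrivial P ∧ Nonempty (X ≃ₗ[A] P × Q) := by
  have : IsArtinianRing A := .of_finite k A
  constructor
  · rintro hJ ⟨P, Q, _, _, _, _, hP, hPnt, ⟨φ⟩⟩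
    have hsplit : (fst A P Q ∘ₗ φ.toLinearMap) ∘ₗ (φ.symm.toLinearMap ∘ₗ inl A P Q) = .id := by
      ext; simp
    have := subsingleton_of_comp_mem_jacobson_bot _ _ hsplit (hJ _ ⟨P, _, _, hP, _, _, rfl⟩)
    exact not_nontrivial P hPnt
  · rintro hnp f ⟨P, _, _, hP, α, β, hf⟩
    by_contra hfJ
    obtain ⟨y, hy⟩ := exists_not_isNilpotent_mul_of_notMem_jacobson_bot hfJ
    rw [Module.End.mul_eq_comp, hf, ← comp_assoc] at hy
    obtain ⟨Y, Z, hYZ, hYproj, hYnt⟩ := exists_isCompl_projective_of_not_isNilpotent _ _ hy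
    exact hnp ⟨Y, Z, _, _, _, _, hYproj, hYnt, ⟨(Submodule.prodEquivOfIsCompl Y Z hYZ).symm⟩⟩

/-- For a finite-dimensional self-injective `k`-algebra `A` and a finitely
generated `A`-module `X`, the subspace `P(X,X)` of endomorphisms factoring through a
projective module is contained in the Jacobson radical of `End_A(X)` iff `X` has no
nonzero projective direct summand. -/
theorem stmt0 (k A : Type) [Field k] [Ring A] [Algebra k A] [FiniteDimensional k A]
    (hself : Module.Injective A A)
    (X : Type) [AddCommGroup X] [Module A X] [Module.Finite A X] :
    (∀ f : Module.End A X,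
      (∃ (P : Type) (_ : AddCommGroup P) (_ : Module A P), Module.Projective A P ∧
        ∃ (α : X →ₗ[A] P) (β : P →ₗ[A] X), (f : X →ₗ[A] X) = β ∘ₗ α) →
      f ∈ Ideal.jacobson (⊥ : Ideal (Module.End A X)))
    ↔ ¬ ∃ (P Q : Type) (_ : AddCommGroup P) (_ : Module A P)
          (_ : AddCommGroup Q) (_ : Module A Q),
        Module.Projective A P ∧ Nontrivial P ∧ Nonempty (X ≃ₗ[A] P × Q) :=
  stmt0_general k A X
end

section
/- Let A be a finite-dimensional self-injective k-algebra with no simple projective modules, Y an indecomposable non-projective finitely generated A-module, and L a simple A-module. Then L embeds as a submodule of Y if and only if the stable Hom space Hom_A(L,Y)/P(L,Y) is nonzero. -/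
/-!
If an embedding `i : L → Y` factors as `β ∘ α` through a projective module, then, `L` being
finitely generated, `α = b ∘ a` factors through a finite free module `F`, which is injective
because `A` is self-injective. Extending `a` along `i` gives `γ : Y → F` such that the
endomorphism `φ = β ∘ b ∘ γ` of `Y` fixes `i(L) ≠ 0`. By Fitting's lemma `φ` is then an
automorphism of the indecomposable module `Y`, which makes `Y` a retract of `F`, hence projective.
Conversely, a nonzero map out of a simple module is injective, and `0` factors through `0`.
-/

theorem LinearMap.exists_factor_through_finite_free {R M Q : Type*} [Ring R]
    [AddCommGroup M] [Module R M] [Module.Finite R M]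
    [AddCommGroup Q] [Module R Q] [Module.Projective R Q] (α : M →ₗ[R] Q) :
    ∃ (T : Finset Q) (a : M →ₗ[R] T → R) (b : (T → R) →ₗ[R] Q), b ∘ₗ a = α := by
  classical
  obtain ⟨s, hs⟩ := Module.projective_def.mp ‹Module.Projective R Q›
  obtain ⟨G, hG⟩ := Module.Finite.fg_top (R := R) (M := M)
  let T := G.biUnion fun g => (s (α g)).support
  have hsupp (m : M) : s (α m) ∈ Finsupp.supported R R (T : Set Q) := by
    refine (Submodule.span_le (p := (Finsupp.supported R R (T : Set Q)).comap (s ∘ₗ α))).mpr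
      (fun g hg => ?_) (hG ▸ Submodule.mem_top : m ∈ Submodule.span R G)
    exact (Finsupp.mem_supported R _).mpr <| Finset.coe_subset.mpr <|
      Finset.subset_biUnion_of_mem (fun g => (s (α g)).support) hg
  refine ⟨T, LinearMap.pi (fun t : T => Finsupp.lapply (t : Q)) ∘ₗ s ∘ₗ α,
    Fintype.linearCombination R Subtype.val, LinearMap.ext fun m => ?_⟩
  conv_rhs => rw [← hs (α m)]
  rw [Finsupp.linearCombination_apply_of_mem_supported R (hsupp m)]
  simpa [Fintype.linearCombination_apply] using Finset.sum_attach T fun t => s (α m) t • t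

theorem Module.End.bijective_or_isNilpotent {R M : Type*} [Ring R] [AddCommGroup M]
    [Module R M] [IsNoetherian R M] [IsArtinian R M]
    (hM : ∀ P Q : Submodule R M, IsCompl P Q → P = ⊥ ∨ Q = ⊥) (φ : Module.End R M) :
    Function.Bijective φ ∨ IsNilpotent φ := by
  obtain ⟨n, hcompl, hn⟩ :=
    (φ.eventually_isCompl_ker_pow_range_pow.and (Filter.eventually_ge_atTop 1)).exists
  rcases hM _ _ hcompl with hker | hrange
  · obtain ⟨m, rfl⟩ := Nat.exists_eq_add_of_le' hn
    have hinj : Function.Injective ⇑(φ ^ m * φ) := by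
      rw [← pow_succ]; exact LinearMap.ker_eq_bot.mp hker
    exact .inl (IsArtinian.bijective_of_injective_endomorphism φ (hinj.of_comp (f := ⇑(φ ^ m))))
  · exact .inr ⟨n, LinearMap.range_eq_bot.mp hrange⟩

theorem LinearMap.comp_ne_of_injective_of_projective {R M Y Q : Type*} [Ring R]
    [Module.Injective R R] [AddCommGroup M] [Module R M] [Module.Finite R M] [Nontrivial M]
    [AddCommGroup Y] [Module R Y] [IsNoetherian R Y] [IsArtinian R Y]
    (hY : ∀ P Q : Submodule R Y, IsCompl P Q → P = ⊥ ∨ Q = ⊥) (hYnp : ¬ Module.Projective R Y)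
    {i : M →ₗ[R] Y} (hi : Function.Injective i)
    [AddCommGroup Q] [Module R Q] [Module.Projective R Q] (α : M →ₗ[R] Q) (β : Q →ₗ[R] Y) :
    β ∘ₗ α ≠ i := by
  intro hfac
  obtain ⟨T, a, b, hab⟩ := α.exists_factor_through_finite_free
  obtain ⟨γ, hγ⟩ := Module.Injective.extension_property R (T → R) M Y i hi a
  let φ : Module.End R Y := β ∘ₗ b ∘ₗ γ
  have hφ (m : M) : φ (i m) = i m := by
    calc φ (i m) = β (b (a m)) := by rw [← hγ]; rfl
      _ = i m := by rw [← hfac, ← hab]; rfl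
  rcases φ.bijective_or_isNilpotent hY with hbij | ⟨n, hn⟩
  · let e := LinearEquiv.ofBijective φ hbij
    exact hYnp (.of_split (γ ∘ₗ e.symm.toLinearMap) (β ∘ₗ b)
      (LinearMap.ext e.apply_symm_apply))
  · obtain ⟨m, hm⟩ := exists_ne (0 : M)
    have hfix : (φ ^ n) (i m) = i m := by
      rw [Module.End.pow_apply, Function.iterate_fixed (hφ m)]
    rw [hn, LinearMap.zero_apply, eq_comm, map_eq_zero_iff i hi] at hfix
    exact hm hfix

theorem stmt5_general (k A : Type) [Field k] [Ring A] [Algebra k A] [FiniteDimensional k A]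
    (hself : Module.Injective A A)
    (Y : Type) [AddCommGroup Y] [Module A Y] [Module.Finite A Y]
    (hYind : Nontrivial Y ∧
      ∀ (P Q : Submodule A Y), IsCompl P Q → P = ⊥ ∨ Q = ⊥)
    (hYnp : ¬ Module.Projective A Y)
    (L : Type) [AddCommGroup L] [Module A L] (hL : IsSimpleModule A L) :
    (∃ f : L →ₗ[A] Y, Function.Injective f) ↔
    (∃ f : L →ₗ[A] Y, ¬ ∃ (Q : Type) (_ : AddCommGroup Q) (_ : Module A Q),
        Module.Projective A Q ∧ ∃ (α : L →ₗ[A] Q) (β : Q →ₗ[A] Y), f = β ∘ₗ α) := by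
  have : IsArtinianRing A := .of_finite k A
  have : Nontrivial L := IsSimpleModule.nontrivial A L
  constructor
  · rintro ⟨i, hi⟩
    exact ⟨i, fun ⟨Q, _, _, _, α, β, hfac⟩ =>
      LinearMap.comp_ne_of_injective_of_projective hYind.2 hYnp hi α β hfac.symm⟩
  · rintro ⟨f, hf⟩
    refine ⟨f, f.injective_or_eq_zero.resolve_right ?_⟩
    rintro rfl
    exact hf ⟨PUnit, _, _, inferInstance, 0, 0, rfl⟩

/-- Over a finite-dimensional self-injective `k`-algebra with no simple
projective modules, a simple module `L` embeds into an indecomposable non-projective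
finitely generated module `Y` iff the stable Hom space `Hom(L,Y)/P(L,Y)` is nonzero,
i.e. iff some homomorphism `L → Y` does not factor through a projective module. -/
theorem stmt5 (k A : Type) [Field k] [Ring A] [Algebra k A] [FiniteDimensional k A]
    (hself : Module.Injective A A)
    (hnsp : ∀ (S : Type) [AddCommGroup S] [Module A S],
        IsSimpleModule A S → ¬ Module.Projective A S)
    (Y : Type) [AddCommGroup Y] [Module A Y] [Module.Finite A Y]
    (hYind : Nontrivial Y ∧
      ∀ (P Q : Submodule A Y), IsCompl P Q → P = ⊥ ∨ Q = ⊥)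
    (hYnp : ¬ Module.Projective A Y)
    (L : Type) [AddCommGroup L] [Module A L] (hL : IsSimpleModule A L) :
    (∃ f : L →ₗ[A] Y, Function.Injective f) ↔
    (∃ f : L →ₗ[A] Y, ¬ ∃ (Q : Type) (_ : AddCommGroup Q) (_ : Module A Q),
        Module.Projective A Q ∧ ∃ (α : L →ₗ[A] Q) (β : Q →ₗ[A] Y), f = β ∘ₗ α) :=
  stmt5_general k A hself Y hYind hYnp L hL
end

section
/- Let C and C' be abelian monoidal categories over a field k in which every object has finite length, with the tensor product of C' exact in each variable and length multiplicative on simples of C' (i.e., length(X ⊗ Y) ≥ length(X)·length(Y)). Let F : C → C' be an exact k-linear monoidal functor. If L is a simple object of C whose left dual L* satisfies L* ⊗ L ≅ 1, then F(L) is a simple object of C'. -/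
/-!
`F(L*) ⊗ F(L) ≅ F(L* ⊗ L) ≅ F(𝟙) ≅ 𝟙` is simple, so `ℓ F(L*) * ℓ F(L) ≤ 1`. Neither factor
is zero, since tensoring with a zero object gives zero, hence both have length `1`.
-/

open CategoryTheory MonoidalCategory Limits

theorem simple_of_simple_tensor {D : Type*} [Category D] [HasZeroMorphisms D]
    [MonoidalCategory D] {X Y : D}
    [(tensorLeft X).PreservesZeroMorphisms] [(tensorRight Y).PreservesZeroMorphisms]
    (ℓ : D → ℕ) (hzero : ∀ Z : D, ℓ Z = 0 → IsZero Z) (hsimple : ∀ Z : D, Simple Z ↔ ℓ Z = 1)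
    (hmul : ℓ X * ℓ Y ≤ ℓ (X ⊗ Y)) (h : Simple (X ⊗ Y)) : Simple Y := by
  have one_le : ∀ Z : D, ¬IsZero Z → 1 ≤ ℓ Z := fun Z hZ =>
    Nat.one_le_iff_ne_zero.mpr (mt (hzero Z) hZ)
  have hX : ¬IsZero X := fun hX => Simple.not_isZero (X ⊗ Y) ((tensorRight Y).map_isZero hX)
  have hY : ¬IsZero Y := fun hY => Simple.not_isZero (X ⊗ Y) ((tensorLeft X).map_isZero hY)
  rw [hsimple]
  exact eq_one_of_mul_le_one_right (one_le X hX) (one_le Y hY) ((hsimple _).mp h ▸ hmul)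

/-- Let `C`, `C'` be abelian monoidal categories over a field `k` with all
objects of finite length, the tensor product of `C'` exact in each variable and length
super-multiplicative on `C'` (`ℓ(X ⊗ Y) ≥ ℓ X * ℓ Y`).  If `F : C ⥤ C'` is an exact
`k`-linear monoidal functor and `L` is a simple object of `C` whose left dual satisfies
`L* ⊗ L ≅ 𝟙`, then `F(L)` is simple.  The length function `ℓ` on `C'` is axiomatised:
it is iso-invariant, vanishes exactly on zero objects, and detects simples. -/
theorem stmt8 (k : Type) [Field k]
    (C C' : Type) [Category C] [Category C'] [Abelian C] [Abelian C']
    [Linear k C] [Linear k C']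
    [MonoidalCategory C] [MonoidalCategory C']
    [∀ X : C', Limits.PreservesFiniteLimits (tensorLeft X)]
    [∀ X : C', Limits.PreservesFiniteColimits (tensorLeft X)]
    [∀ X : C', Limits.PreservesFiniteLimits (tensorRight X)]
    [∀ X : C', Limits.PreservesFiniteColimits (tensorRight X)]
    (ℓ : C' → ℕ)
    (hiso : ∀ X Y : C', (X ≅ Y) → ℓ X = ℓ Y)
    (hzero : ∀ X : C', ℓ X = 0 ↔ Limits.IsZero X)
    (hsimple : ∀ X : C', Simple X ↔ ℓ X = 1)
    (hmul : ∀ X Y : C', ℓ X * ℓ Y ≤ ℓ (X ⊗ Y))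
    (hunit : Simple (𝟙_ C'))
    (F : C ⥤ C') [F.Additive] [F.Linear k] [F.Monoidal]
    [Limits.PreservesFiniteLimits F] [Limits.PreservesFiniteColimits F]
    (L : C) (hL : Simple L)
    (Ldual : C) (hdual : Nonempty (Ldual ⊗ L ≅ 𝟙_ C)) :
    Simple (F.obj L) := by
  obtain ⟨e⟩ := hdual
  have hFe : F.obj Ldual ⊗ F.obj L ≅ 𝟙_ C' :=
    (Functor.Monoidal.μIso F Ldual L).trans ((F.mapIso e).trans (Functor.Monoidal.εIso F).symm)
  exact simple_of_simple_tensor ℓ (fun X => (hzero X).mp) hsimple (hmul _ _) (Simple.of_iso hFe)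
end

section
/- Let I and J be finite sets, and for each i ∈ I and j ∈ J let a_i, b_i, c_j, d_j be positive real numbers. Suppose for each i ∈ I there is a nonempty subset J_i ⊆ J with ∪_{i∈I} J_i = J, and suppose a_i ≥ Σ_{j∈J_i} c_j and b_i ≥ Σ_{j∈J_i} d_j for all i. If Σ_{i∈I} a_i b_i = Σ_{j∈J} c_j d_j, then every J_i is a singleton, the map φ : I → J with J_i = {φ(i)} is surjective, and a_i = c_{φ(i)}, b_i = d_{φ(i)} for all i ∈ I. -/
/-!
Since `c` and `d` are positive, `∑_{J i} c d ≤ (∑_{J i} c) (∑_{J i} d) ≤ a i b i`, the first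
inequality being strict unless `J i` is a singleton, and since the `J i` cover `J`,
`∑_J c d ≤ ∑_I ∑_{J i} c d`. Chaining these gives `∑_J c d ≤ ∑_I a b`, so the hypothesis
`∑_I a b = ∑_J c d` forces equality at every step: each `J i` is a singleton, and
equality in `(∑_{J i} c) (∑_{J i} d) ≤ a i b i` with positive factors gives `a i = ∑_{J i} c`
and `b i = ∑_{J i} d`.
-/

open Finset

namespace Finset

variable {ι R : Type*} [CommSemiring R] [PartialOrder R] {s : Finset ι} {c d : ι → R}

lemma sum_mul_le_sum_mul_sum [IsOrderedRing R] (hc : ∀ j ∈ s, 0 ≤ c j) (hd : ∀ j ∈ s, 0 ≤ d j) :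
    ∑ j ∈ s, c j * d j ≤ (∑ j ∈ s, c j) * ∑ j ∈ s, d j := by
  rw [sum_mul]
  exact sum_le_sum fun j hj => mul_le_mul_of_nonneg_left (single_le_sum hd hj) (hc j hj)

lemma sum_mul_lt_sum_mul_sum [IsStrictOrderedRing R] (hs : s.Nontrivial)
    (hc : ∀ j ∈ s, 0 < c j) (hd : ∀ j ∈ s, 0 < d j) :
    ∑ j ∈ s, c j * d j < (∑ j ∈ s, c j) * ∑ j ∈ s, d j := by
  have hd_lt (j) (hj : j ∈ s) : d j < ∑ k ∈ s, d k := by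
    obtain ⟨k, hk, hkj⟩ := hs.exists_ne j
    exact single_lt_sum hkj hj hk (hd k hk) fun m hm _ => (hd m hm).le
  rw [sum_mul]
  exact sum_lt_sum_of_nonempty hs.nonempty fun j hj =>
    mul_lt_mul_of_pos_left (hd_lt j hj) (hc j hj)

lemma sum_le_sum_sum_of_forall_exists_mem {ι κ M : Type*} [Fintype ι] [Fintype κ]
    [AddCommMonoid M] [PartialOrder M] [IsOrderedAddMonoid M] {s : ι → Finset κ}
    (hcover : ∀ j, ∃ i, j ∈ s i) {f : κ → M} (hf : ∀ j, 0 ≤ f j) :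
    ∑ j, f j ≤ ∑ i, ∑ j ∈ s i, f j := by
  classical
  have himage : (univ.sigma s).image Sigma.snd = univ :=
    eq_univ_of_forall fun j => by simpa using hcover j
  rw [sum_sigma', ← himage]
  exact sum_image_le_of_nonneg fun j _ => hf j

end Finset

theorem stmt12_general (I J : Type) [Fintype I] [Fintype J]
    (a b : I → ℝ) (c d : J → ℝ)
    (hc : ∀ j, 0 < c j) (hd : ∀ j, 0 < d j)
    (Ji : I → Finset J) (hne : ∀ i, (Ji i).Nonempty)
    (hcover : ∀ j : J, ∃ i : I, j ∈ Ji i)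
    (hac : ∀ i, (∑ j ∈ Ji i, c j) ≤ a i)
    (hbd : ∀ i, (∑ j ∈ Ji i, d j) ≤ b i)
    (heq : ∑ i : I, a i * b i = ∑ j : J, c j * d j) :
    ∃ φ : I → J, (∀ i, Ji i = {φ i}) ∧ Function.Surjective φ ∧
      ∀ i, a i = c (φ i) ∧ b i = d (φ i) := by
  have hc_pos (i) : 0 < ∑ j ∈ Ji i, c j := sum_pos (fun j _ => hc j) (hne i)
  have hd_pos (i) : 0 < ∑ j ∈ Ji i, d j := sum_pos (fun j _ => hd j) (hne i)
  have hblock_le (i) : ∑ j ∈ Ji i, c j * d j ≤ (∑ j ∈ Ji i, c j) * ∑ j ∈ Ji i, d j :=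
    sum_mul_le_sum_mul_sum (fun j _ => (hc j).le) (fun j _ => (hd j).le)
  have hprod_le (i) : (∑ j ∈ Ji i, c j) * (∑ j ∈ Ji i, d j) ≤ a i * b i :=
    mul_le_mul (hac i) (hbd i) (hd_pos i).le ((hc_pos i).trans_le (hac i)).le
  have hblock_eq (i) : ∑ j ∈ Ji i, c j * d j = a i * b i := by
    refine (sum_eq_sum_iff_of_le fun k _ => (hblock_le k).trans (hprod_le k)).1
      (le_antisymm (sum_le_sum fun k _ => (hblock_le k).trans (hprod_le k)) ?_) i (mem_univ i)
    exact heq ▸ sum_le_sum_sum_of_forall_exists_mem hcover fun j => (mul_pos (hc j) (hd j)).le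
  have hsplit (i) : ∑ j ∈ Ji i, c j * d j = (∑ j ∈ Ji i, c j) * ∑ j ∈ Ji i, d j :=
    le_antisymm (hblock_le i) (hblock_eq i ▸ hprod_le i)
  have hsingleton (i) : ∃ j, Ji i = {j} :=
    (hne i).exists_eq_singleton_or_nontrivial.resolve_right fun h =>
      (sum_mul_lt_sum_mul_sum h (fun j _ => hc j) fun j _ => hd j).ne (hsplit i)
  choose φ hφ using hsingleton
  refine ⟨φ, hφ, fun j => ?_, fun i => ?_⟩
  · obtain ⟨i, hi⟩ := hcover j
    exact ⟨i, (mem_singleton.1 (hφ i ▸ hi)).symm⟩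
  · rw [← sum_singleton c (φ i), ← sum_singleton d (φ i), ← hφ i]
    exact ((mul_eq_mul_iff_eq_and_eq_of_pos (hac i) (hbd i) (hc_pos i)
      ((hd_pos i).trans_le (hbd i))).1 ((hsplit i).symm.trans (hblock_eq i))).imp Eq.symm Eq.symm

/-- the numerical core of the Frobenius–Perron dimension count.  If
`a i ≥ ∑_{j ∈ J i} c j`, `b i ≥ ∑_{j ∈ J i} d j`, all quantities are positive, the
nonempty sets `J i` cover `J`, and `∑ a i * b i = ∑ c j * d j`, then every `J i` is a
singleton `{φ i}` with `φ` surjective and `a i = c (φ i)`, `b i = d (φ i)`. -/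
theorem stmt12 (I J : Type) [Fintype I] [Fintype J] [DecidableEq J]
    (a b : I → ℝ) (c d : J → ℝ)
    (ha : ∀ i, 0 < a i) (hb : ∀ i, 0 < b i)
    (hc : ∀ j, 0 < c j) (hd : ∀ j, 0 < d j)
    (Ji : I → Finset J) (hne : ∀ i, (Ji i).Nonempty)
    (hcover : ∀ j : J, ∃ i : I, j ∈ Ji i)
    (hac : ∀ i, (∑ j ∈ Ji i, c j) ≤ a i)
    (hbd : ∀ i, (∑ j ∈ Ji i, d j) ≤ b i)
    (heq : ∑ i : I, a i * b i = ∑ j : J, c j * d j) :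
    ∃ φ : I → J, (∀ i, Ji i = {φ i}) ∧ Function.Surjective φ ∧
      ∀ i, a i = c (φ i) ∧ b i = d (φ i) :=
  stmt12_general I J a b c d hc hd Ji hne hcover hac hbd heq
end

section
/- Let A and A' be finite-dimensional self-injective k-algebras with no simple projective modules, and let F : A-mod → A'-mod be a k-linear functor preserving projectives inducing a stable equivalence. For a simple A-module L and a simple A'-module L', let Φ(L) denote the non-projective part of F(L) and Ψ(L') the corresponding module under the inverse bijection. Then L is a submodule of Ψ(L') if and only if L' is a quotient module of Φ(L). -/
open CategoryTheory

/-- The stable relation: maps are identified when their difference factors through a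
projective module. -/
def stableRel (A : Type) [Ring A] : HomRel (ModuleCat.{0} A) :=
  fun {X Y} f g => ∃ (P : ModuleCat.{0} A) (α : X ⟶ P) (β : P ⟶ Y),
    Projective P ∧ f = g + α ≫ β

/-- An indecomposable module. -/
def Indec {A : Type} [Ring A] (X : ModuleCat.{0} A) : Prop :=
  ¬ Limits.IsZero X ∧ ∀ Y Z : ModuleCat.{0} A,
    Nonempty (X ≅ Y ⊞ Z) → Limits.IsZero Y ∨ Limits.IsZero Z

/-!
Stable Hom spaces are transported by the stable equivalence and do not see projective summands,
so `L → ΨL'` is stably nonzero iff `ΦL → L'` is. It remains to see that for `L` simple and `X`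
indecomposable non-projective, a stably nonzero map `L → X` exists iff a mono does (dually for
maps `X → L'` and epis). A nonzero map out of a simple module is mono. Conversely, a mono `L → X`
factoring through a projective can be rerouted through an injective envelope `L → V` with `V`
projective, which exists because the algebra is self-injective; left minimality makes `V → X`
injective, so the injective module `V` splits off the indecomposable `X`, and `X ≅ V` would be
projective. The dual argument uses a projective cover of `L'`.
-/

open Limits ZeroObject

local notation "𝒬" => Quotient.functor (stableRel _)

section StableCategory

variable {R : Type} [Ring R]

def FactorsThroughProjective {X Y : ModuleCat.{0} R} (f : X ⟶ Y) : Prop :=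
  ∃ (P : ModuleCat.{0} R) (α : X ⟶ P) (β : P ⟶ Y), Projective P ∧ f = α ≫ β

namespace FactorsThroughProjective

variable {X Y Z : ModuleCat.{0} R}

lemma zero : FactorsThroughProjective (0 : X ⟶ Y) :=
  ⟨0, 0, 0, inferInstance, by simp⟩

lemma add {f g : X ⟶ Y} (hf : FactorsThroughProjective f) (hg : FactorsThroughProjective g) :
    FactorsThroughProjective (f + g) := by
  obtain ⟨P, α, β, hP, rfl⟩ := hf
  obtain ⟨Q, γ, δ, hQ, rfl⟩ := hg
  exact ⟨P ⊞ Q, biprod.lift α γ, biprod.desc β δ, inferInstance, by simp⟩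

lemma neg {f : X ⟶ Y} (hf : FactorsThroughProjective f) : FactorsThroughProjective (-f) := by
  obtain ⟨P, α, β, hP, rfl⟩ := hf
  exact ⟨P, -α, β, hP, by simp⟩

lemma comp_left {f : Y ⟶ Z} (hf : FactorsThroughProjective f) (g : X ⟶ Y) :
    FactorsThroughProjective (g ≫ f) := by
  obtain ⟨P, α, β, hP, rfl⟩ := hf
  exact ⟨P, g ≫ α, β, hP, by simp⟩

lemma comp_right {f : X ⟶ Y} (hf : FactorsThroughProjective f) (g : Y ⟶ Z) :
    FactorsThroughProjective (f ≫ g) := by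
  obtain ⟨P, α, β, hP, rfl⟩ := hf
  exact ⟨P, α, β ≫ g, hP, by simp⟩

end FactorsThroughProjective

lemma stableRel_iff {X Y : ModuleCat.{0} R} (f g : X ⟶ Y) :
    stableRel R f g ↔ FactorsThroughProjective (f - g) := by
  simp only [stableRel, FactorsThroughProjective, sub_eq_iff_eq_add']

instance : Congruence (stableRel R) where
  equivalence.refl f := (stableRel_iff f f).mpr (by simpa using .zero)
  equivalence.symm h := (stableRel_iff _ _).mpr (by simpa using ((stableRel_iff _ _).mp h).neg)
  equivalence.trans h₁ h₂ := (stableRel_iff _ _).mpr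
    (by simpa using ((stableRel_iff _ _).mp h₁).add ((stableRel_iff _ _).mp h₂))
  comp_left f _ _ h := (stableRel_iff _ _).mpr
    (by simpa [Preadditive.comp_sub] using ((stableRel_iff _ _).mp h).comp_left f)
  comp_right g h := (stableRel_iff _ _).mpr
    (by simpa [Preadditive.sub_comp] using ((stableRel_iff _ _).mp h).comp_right g)

lemma subsingleton_stableHom_iff (X Y : ModuleCat.{0} R) :
    Subsingleton ((𝒬).obj X ⟶ (𝒬).obj Y) ↔ ∀ f : X ⟶ Y, FactorsThroughProjective f := by
  constructor
  · intro h f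
    have := (Quotient.functor_map_eq_iff (stableRel R) f 0).mp (Subsingleton.elim _ _)
    simpa using (stableRel_iff f 0).mp this
  · refine fun h => ⟨fun φ ψ => ?_⟩
    obtain ⟨f, rfl⟩ := (𝒬).map_surjective φ
    obtain ⟨g, rfl⟩ := (𝒬).map_surjective ψ
    exact (Quotient.functor_map_eq_iff _ _ _).mpr ((stableRel_iff f g).mpr (h _))

noncomputable def stableIsoBiprodOfProjective (X P : ModuleCat.{0} R) [Projective P] :
    (𝒬).obj (X ⊞ P) ≅ (𝒬).obj X where
  hom := (𝒬).map biprod.fst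
  inv := (𝒬).map biprod.inl
  hom_inv_id := by
    rw [← Functor.map_comp, ← (𝒬).map_id, Quotient.functor_map_eq_iff]
    exact ⟨P, biprod.snd, -biprod.inr, inferInstance, by simp [← biprod.total]⟩
  inv_hom_id := by simp [← Functor.map_comp]

lemma subsingleton_stableHom_congr {A A' : Type} [Ring A] [Ring A']
    {F : ModuleCat.{0} A ⥤ ModuleCat.{0} A'}
    {G : Quotient (stableRel A) ⥤ Quotient (stableRel A')} [G.Full] [G.Faithful]
    (hG : 𝒬 ⋙ G = F ⋙ 𝒬) (X Y : ModuleCat.{0} A) :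
    Subsingleton ((𝒬).obj X ⟶ (𝒬).obj Y) ↔
      Subsingleton ((𝒬).obj (F.obj X) ⟶ (𝒬).obj (F.obj Y)) := by
  rw [(Functor.FullyFaithful.ofFullyFaithful G).homEquiv.subsingleton_congr,
    ← Functor.comp_obj, ← Functor.comp_obj, hG, Functor.comp_obj, Functor.comp_obj]

end StableCategory

section Indecomposable

variable {R : Type} [Ring R] {X : ModuleCat.{0} R}

lemma Indec.isIso_of_isSplitMono (hX : Indec X) {Y : ModuleCat.{0} R} (hY : ¬ IsZero Y)
    (i : Y ⟶ X) [IsSplitMono i] : IsIso i := by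
  have hb := isBilimitBinaryBiconeOfIsSplitMonoOfCokernel (colimit.isColimit (parallelPair i 0))
  obtain hY' | hC := hX.2 _ _ ⟨biprod.uniqueUpToIso _ _ hb⟩
  · exact absurd hY' hY
  · have : Epi i := Preadditive.epi_of_isZero_cokernel' _ (colimit.isColimit _) hC
    exact isIso_of_mono_of_epi i

lemma Indec.projective_of_isSplitMono (hX : Indec X) {V : Type} [AddCommGroup V] [Module R V]
    [Module.Projective R V] [Nontrivial V] (i : ModuleCat.of R V ⟶ X) [IsSplitMono i] :
    Projective X := by
  have : IsIso i := hX.isIso_of_isSplitMono (by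
    rw [ModuleCat.isZero_iff_subsingleton, not_subsingleton_iff_nontrivial]; infer_instance) i
  exact .of_iso (asIso i) ((IsProjective.iff_projective V).mp ‹_›)

end Indecomposable

section Modules

variable {R : Type} [Ring R] {M N : Type} [AddCommGroup M] [Module R M] [AddCommGroup N]
  [Module R N]

lemma Module.Injective.of_split [Module.Injective R M] (i : N →ₗ[R] M) (r : M →ₗ[R] N)
    (h : r ∘ₗ i = .id) : Module.Injective R N where
  out X Y _ _ _ _ f hf g := by
    obtain ⟨k, hk⟩ := Module.Injective.extension_property R M X Y f hf (i ∘ₗ g)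
    refine ⟨r ∘ₗ k, fun x => ?_⟩
    simpa using congr(r ($hk x)).trans congr($h (g x))

lemma IsCompl.exists_retraction_map_subtype {V : Submodule R M} {K W : Submodule R V}
    (h : IsCompl K W) :
    ∃ (i : W.map V.subtype →ₗ[R] V) (r : V →ₗ[R] W.map V.subtype), r ∘ₗ i = .id := by
  let e := Submodule.equivMapOfInjective V.subtype V.injective_subtype W
  refine ⟨W.subtype ∘ₗ e.symm, e ∘ₗ W.projectionOnto K h.symm, ?_⟩
  ext x
  simp [Submodule.projectionOnto_apply_left]

lemma LinearMap.comp_pow_eq_self {π : M →ₗ[R] N} {e : Module.End R M} (h : π ∘ₗ e = π) (n : ℕ) :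
    π ∘ₗ e ^ n = π := by
  induction n with
  | zero => rfl
  | succ n ih => rw [pow_succ, Module.End.mul_eq_comp, ← LinearMap.comp_assoc, ih, h]

lemma LinearMap.pow_comp_eq_self {ι : N →ₗ[R] M} {e : Module.End R M} (h : e ∘ₗ ι = ι) (n : ℕ) :
    (e ^ n) ∘ₗ ι = ι := by
  induction n with
  | zero => rfl
  | succ n ih => rw [pow_succ', Module.End.mul_eq_comp, LinearMap.comp_assoc, ih, h]

/-- Fitting's lemma, in the form used to shrink a submodule `V` along a non-surjective
endomorphism. -/
lemma Submodule.exists_isCompl_map_subtype_lt [IsArtinian R M] [IsNoetherian R M]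
    (V : Submodule R M) {e : Module.End R V} (he : ¬ Function.Surjective e) :
    ∃ n, IsCompl (LinearMap.ker (e ^ n)) (LinearMap.range (e ^ n)) ∧
      (LinearMap.range (e ^ n)).map V.subtype < V := by
  obtain ⟨n, hn⟩ := Filter.eventually_atTop.mp e.eventually_isCompl_ker_pow_range_pow
  refine ⟨n + 1, hn _ n.le_succ, ?_⟩
  have hne : LinearMap.range (e ^ (n + 1)) ≠ ⊤ := fun htop =>
    he <| LinearMap.range_eq_top.mp <| top_le_iff.mp <| htop ▸ by
      rw [pow_succ', Module.End.mul_eq_comp]; exact LinearMap.range_comp_le_range _ _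
  simpa using (Submodule.map_lt_map_iff_of_injective V.injective_subtype).mpr
    (lt_top_iff_ne_top.mpr hne)

end Modules

section MinimalApproximations

variable {R : Type} [Ring R] {P S L I Y : Type} [AddCommGroup P] [Module R P] [AddCommGroup S]
  [Module R S] [AddCommGroup L] [Module R L] [AddCommGroup I] [Module R I] [AddCommGroup Y]
  [Module R Y]

structure IsProjectiveCover (π : P →ₗ[R] S) : Prop where
  isProjective : Module.Projective R P
  surjective : Function.Surjective π
  right_minimal : ∀ e : Module.End R P, π ∘ₗ e = π → Function.Surjective e

structure IsInjectiveEnvelope (ι : L →ₗ[R] I) : Prop where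
  isInjective : Module.Injective R I
  injective : Function.Injective ι
  left_minimal : ∀ e : Module.End R I, e ∘ₗ ι = ι → Function.Injective e

lemma IsProjectiveCover.surjective_of_surjective_comp {π : P →ₗ[R] S} (hπ : IsProjectiveCover π)
    (φ : Y →ₗ[R] P) (hφ : Function.Surjective (π ∘ₗ φ)) : Function.Surjective φ := by
  have := hπ.isProjective
  obtain ⟨t, ht⟩ := Module.projective_lifting_property (π ∘ₗ φ) π hφ
  exact .of_comp (hπ.right_minimal (φ ∘ₗ t) ht)

lemma IsInjectiveEnvelope.injective_of_injective_comp {ι : L →ₗ[R] I}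
    (hι : IsInjectiveEnvelope ι) (φ : I →ₗ[R] Y) (hφ : Function.Injective (φ ∘ₗ ι)) :
    Function.Injective φ := by
  have := hι.isInjective
  obtain ⟨t, ht⟩ := Module.Injective.extension_property R I L Y (φ ∘ₗ ι) hφ ι
  exact .of_comp (hι.left_minimal (t ∘ₗ φ) ht)

variable [IsArtinian R P] [IsNoetherian R P] [IsArtinian R I] [IsNoetherian R I]

/-- A minimal projective submodule of `P` still mapping onto `S` is a projective cover. -/
lemma exists_isProjectiveCover [Module.Projective R P] {π₀ : P →ₗ[R] S}
    (hπ₀ : Function.Surjective π₀) :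
    ∃ (V : Submodule R P) (π : V →ₗ[R] S), IsProjectiveCover π := by
  let s := {V : Submodule R P | Module.Projective R V ∧ Function.Surjective (π₀ ∘ₗ V.subtype)}
  have htop : ⊤ ∈ s := ⟨.of_equiv Submodule.topEquiv.symm, fun y => by
    obtain ⟨x, rfl⟩ := hπ₀ y; exact ⟨⟨x, trivial⟩, rfl⟩⟩
  obtain ⟨V, ⟨hVproj, hVsurj⟩, hVmin⟩ := wellFounded_lt.has_min s ⟨⊤, htop⟩
  refine ⟨V, π₀ ∘ₗ V.subtype, hVproj, hVsurj, fun e he => ?_⟩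
  by_contra hne
  obtain ⟨n, hcompl, hlt⟩ := V.exists_isCompl_map_subtype_lt hne
  obtain ⟨i, r, hri⟩ := hcompl.exists_retraction_map_subtype
  refine hVmin _ ⟨.of_split i r hri, fun y => ?_⟩ hlt
  obtain ⟨v, rfl⟩ := hVsurj y
  refine ⟨⟨V.subtype ((e ^ n) v), Submodule.mem_map_of_mem (LinearMap.mem_range_self _ v)⟩, ?_⟩
  exact congr($(LinearMap.comp_pow_eq_self he n) v)

/-- A minimal injective and projective submodule of `I` still containing the image of `L` is
an injective envelope. -/
lemma exists_isInjectiveEnvelope [Module.Injective R I] [Module.Projective R I]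
    {ι₀ : L →ₗ[R] I} (hι₀ : Function.Injective ι₀) :
    ∃ (V : Submodule R I) (ι : L →ₗ[R] V), IsInjectiveEnvelope ι ∧ Module.Projective R V := by
  let s := {V : Submodule R I |
    Module.Injective R V ∧ Module.Projective R V ∧ LinearMap.range ι₀ ≤ V}
  have htop : ⊤ ∈ s := ⟨.of_split Submodule.topEquiv.toLinearMap
    Submodule.topEquiv.symm.toLinearMap (by ext; rfl), .of_equiv Submodule.topEquiv.symm, le_top⟩
  obtain ⟨V, ⟨hVinj, hVproj, hVrange⟩, hVmin⟩ := wellFounded_lt.has_min s ⟨⊤, htop⟩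
  let ι : L →ₗ[R] V := ι₀.codRestrict V fun l => hVrange (LinearMap.mem_range_self ι₀ l)
  refine ⟨V, ι, ⟨hVinj, fun a b h => hι₀ congr(($h : I)), fun e he => ?_⟩, hVproj⟩
  by_contra hne
  have hns : ¬ Function.Surjective e := fun h =>
    hne (IsNoetherian.injective_of_surjective_endomorphism e h)
  obtain ⟨n, hcompl, hlt⟩ := V.exists_isCompl_map_subtype_lt hns
  obtain ⟨i, r, hri⟩ := hcompl.exists_retraction_map_subtype
  refine hVmin _ ⟨.of_split i r hri, .of_split i r hri, ?_⟩ hlt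
  rintro _ ⟨l, rfl⟩
  change V.subtype (ι l) ∈ _
  rw [← congr($(LinearMap.pow_comp_eq_self he n) l)]
  exact Submodule.mem_map_of_mem (LinearMap.mem_range_self _ _)

end MinimalApproximations

lemma Module.Projective.exists_comp_eq_of_finite {R L P : Type} [Ring R] [AddCommGroup L]
    [Module R L] [AddCommGroup P] [Module R P] [Module.Finite R L] [Module.Projective R P]
    (α : L →ₗ[R] P) :
    ∃ (T : Finset P) (a : L →ₗ[R] (T → R)) (b : (T → R) →ₗ[R] P), b ∘ₗ a = α := by
  classical
  obtain ⟨s, hs⟩ := Module.projective_def.mp ‹Module.Projective R P›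
  obtain ⟨G, hG⟩ := Module.Finite.fg_top (R := R) (M := L)
  let T := G.biUnion fun g => (s (α g)).support
  have hT : ∀ l, s (α l) ∈ Finsupp.supported R R (T : Set P) := by
    have : Submodule.span R (G : Set L) ≤ (Finsupp.supported R R (T : Set P)).comap (s ∘ₗ α) :=
      Submodule.span_le.mpr fun g hg => (Finsupp.mem_supported R (s (α g))).mpr (by
        simpa using Finset.subset_biUnion_of_mem (fun g => (s (α g)).support) hg)
    exact fun l => this (hG ▸ Submodule.mem_top)
  refine ⟨T, LinearMap.pi fun t => Finsupp.lapply t.1 ∘ₗ s ∘ₗ α,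
    Fintype.linearCombination R fun t : T => (t : P), ?_⟩
  ext l
  simp only [LinearMap.comp_apply, Fintype.linearCombination_apply, LinearMap.pi_apply,
    Finsupp.lapply_apply]
  rw [Finset.sum_coe_sort T fun p => s (α l) p • p]
  rw [← Finsupp.linearCombination_apply_of_mem_supported R (hT l)]
  exact hs (α l)

section NonvanishingStableHom

variable {R : Type} [Ring R] [IsArtinianRing R]

lemma Indec.not_factorsThroughProjective_of_epi {X S : ModuleCat.{0} R} [Module.Finite R S]
    [Nontrivial S] (hX : Indec X) (hXnp : ¬ Projective X) (g : X ⟶ S) [Epi g] :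
    ¬ FactorsThroughProjective g := by
  rintro ⟨P, α, β, hP, rfl⟩
  have : Module.Projective R P := (IsProjective.iff_projective P).mpr hP
  obtain ⟨n, π₀, hπ₀⟩ := Module.Finite.exists_fin' R S
  obtain ⟨V, π, hπ⟩ := exists_isProjectiveCover hπ₀
  have := hπ.isProjective
  obtain ⟨w, hw⟩ := Module.projective_lifting_property π β.hom hπ.surjective
  have hsurj : Function.Surjective (w ∘ₗ α.hom) := hπ.surjective_of_surjective_comp _ <| by
    rw [← LinearMap.comp_assoc, hw]; exact (ModuleCat.epi_iff_surjective (α ≫ β)).mp ‹_›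
  obtain ⟨s, hs⟩ := Module.projective_lifting_property _ LinearMap.id hsurj
  have : IsSplitMono (ModuleCat.ofHom s) :=
    ⟨⟨ModuleCat.ofHom (w ∘ₗ α.hom), ModuleCat.hom_ext hs⟩⟩
  have : Nontrivial V := hπ.surjective.nontrivial
  exact hXnp (hX.projective_of_isSplitMono (ModuleCat.ofHom s))

lemma Indec.not_factorsThroughProjective_of_mono (hR : Module.Injective R R)
    {L X : ModuleCat.{0} R} [Module.Finite R L] [Nontrivial L] (hX : Indec X)
    (hXnp : ¬ Projective X) (f : L ⟶ X) [Mono f] : ¬ FactorsThroughProjective f := by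
  rintro ⟨P, α, β, hP, rfl⟩
  have : Module.Projective R P := (IsProjective.iff_projective P).mpr hP
  obtain ⟨T, a, b, hab⟩ := Module.Projective.exists_comp_eq_of_finite α.hom
  have hf : Function.Injective (β.hom ∘ₗ b ∘ₗ a) := by
    rw [hab]; exact (ModuleCat.mono_iff_injective (α ≫ β)).mp ‹_›
  obtain ⟨V, ι, hι, _⟩ := exists_isInjectiveEnvelope fun x y h => hf congr((β.hom ∘ₗ b) $h)
  have := hι.isInjective
  obtain ⟨w, hw⟩ := Module.Injective.extension_property R (T → R) L V ι hι.injective a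
  have hγ : Function.Injective (β.hom ∘ₗ b ∘ₗ w) :=
    hι.injective_of_injective_comp _ (by rwa [LinearMap.comp_assoc, LinearMap.comp_assoc, hw])
  obtain ⟨ρ, hρ⟩ := Module.Injective.extension_property R V V X _ hγ LinearMap.id
  have : IsSplitMono (ModuleCat.ofHom (β.hom ∘ₗ b ∘ₗ w)) :=
    ⟨⟨ModuleCat.ofHom ρ, ModuleCat.hom_ext hρ⟩⟩
  have : Nontrivial V := hι.injective.nontrivial
  exact hXnp (hX.projective_of_isSplitMono (ModuleCat.ofHom (β.hom ∘ₗ b ∘ₗ w)))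

end NonvanishingStableHom

theorem stmt14_general (k : Type) [Field k]
    (A A' : Type) [Ring A] [Ring A'] [Algebra k A] [Algebra k A']
    [FiniteDimensional k A] [FiniteDimensional k A']
    (hselfA : Module.Injective A A)
    (F : ModuleCat.{0} A ⥤ ModuleCat.{0} A')
    (G : Quotient (stableRel A) ⥤ Quotient (stableRel A'))
    (hG : Quotient.functor (stableRel A) ⋙ G = F ⋙ Quotient.functor (stableRel A'))
    (hGe : G.IsEquivalence)
    (L : ModuleCat.{0} A) (hL : Simple L)
    (L' : ModuleCat.{0} A') (hL' : Simple L')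
    -- `ΦL` is the non-projective part of `F L`
    (ΦL : ModuleCat.{0} A') (hΦind : Indec ΦL) (hΦnp : ¬ Projective ΦL)
    (P' : ModuleCat.{0} A') (hP' : Projective P')
    (hΦ : Nonempty (F.obj L ≅ ΦL ⊞ P'))
    -- `ΨL'` is the indecomposable non-projective module with `F(ΨL') ≅ L' ⊕ (proj)`
    (ΨL' : ModuleCat.{0} A) (hΨind : Indec ΨL') (hΨnp : ¬ Projective ΨL')
    (Q' : ModuleCat.{0} A') (hQ' : Projective Q')
    (hΨ : Nonempty (F.obj ΨL' ≅ L' ⊞ Q')) :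
    (∃ f : L ⟶ ΨL', Mono f) ↔ (∃ g : ΦL ⟶ L', Epi g) := by
  have := IsArtinianRing.of_finite k A
  have := IsArtinianRing.of_finite k A'
  have := (simple_iff_isSimpleModule' L).mp hL
  have := (simple_iff_isSimpleModule' L').mp hL'
  have : Nontrivial L := IsSimpleModule.nontrivial A L
  have : Nontrivial L' := IsSimpleModule.nontrivial A' L'
  obtain ⟨eΦ⟩ := hΦ
  obtain ⟨eΨ⟩ := hΨ
  have hstable : (∀ f : L ⟶ ΨL', FactorsThroughProjective f) ↔
      ∀ g : ΦL ⟶ L', FactorsThroughProjective g := by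
    rw [← subsingleton_stableHom_iff, ← subsingleton_stableHom_iff,
      subsingleton_stableHom_congr hG]
    exact (((𝒬).mapIso eΦ ≪≫ stableIsoBiprodOfProjective ΦL P').homCongr
      ((𝒬).mapIso eΨ ≪≫ stableIsoBiprodOfProjective L' Q')).subsingleton_congr
  constructor
  · rintro ⟨f, hf⟩
    obtain ⟨g, hg⟩ := not_forall.mp <| hstable.not.mp fun h =>
      hΨind.not_factorsThroughProjective_of_mono hselfA hΨnp f (h f)
    exact ⟨g, epi_of_nonzero_to_simple fun h => hg (h ▸ .zero)⟩
  · rintro ⟨g, hg⟩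
    obtain ⟨f, hf⟩ := not_forall.mp <| hstable.not.mpr fun h =>
      hΦind.not_factorsThroughProjective_of_epi hΦnp g (h g)
    exact ⟨f, mono_of_nonzero_from_simple fun h => hf (h ▸ .zero)⟩

/-- With `F` a `k`-linear functor preserving projectives and inducing a
stable equivalence between the module categories of finite-dimensional self-injective
`k`-algebras `A`, `A'` without simple projectives, let `L`, `L'` be simple modules,
`ΦL` the non-projective part of `F L` and `ΨL'` the module with `F(ΨL') ≅ L' ⊕ (proj)`
(so that `Φ(ΨL') ≅ L'`).  Then `L` is a submodule of `ΨL'` iff `L'` is a quotient of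
`ΦL`. -/
theorem stmt14 (k : Type) [Field k]
    (A A' : Type) [Ring A] [Ring A'] [Algebra k A] [Algebra k A']
    [FiniteDimensional k A] [FiniteDimensional k A']
    (hselfA : Module.Injective A A) (hselfA' : Module.Injective A' A')
    (hnspA : ∀ S : ModuleCat.{0} A, Simple S → ¬ Projective S)
    (hnspA' : ∀ S : ModuleCat.{0} A', Simple S → ¬ Projective S)
    (F : ModuleCat.{0} A ⥤ ModuleCat.{0} A') [F.Additive] [F.Linear k]
    (hproj : ∀ P : ModuleCat.{0} A, Projective P → Projective (F.obj P))
    (G : Quotient (stableRel A) ⥤ Quotient (stableRel A'))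
    (hG : Quotient.functor (stableRel A) ⋙ G = F ⋙ Quotient.functor (stableRel A'))
    (hGe : G.IsEquivalence)
    (L : ModuleCat.{0} A) (hL : Simple L)
    (L' : ModuleCat.{0} A') (hL' : Simple L')
    -- `ΦL` is the non-projective part of `F L`
    (ΦL : ModuleCat.{0} A') (hΦind : Indec ΦL) (hΦnp : ¬ Projective ΦL)
    (P' : ModuleCat.{0} A') (hP' : Projective P')
    (hΦ : Nonempty (F.obj L ≅ ΦL ⊞ P'))
    -- `ΨL'` is the indecomposable non-projective module with `F(ΨL') ≅ L' ⊕ (proj)`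
    (ΨL' : ModuleCat.{0} A) (hΨind : Indec ΨL') (hΨnp : ¬ Projective ΨL')
    (Q' : ModuleCat.{0} A') (hQ' : Projective Q')
    (hΨ : Nonempty (F.obj ΨL' ≅ L' ⊞ Q')) :
    (∃ f : L ⟶ ΨL', Mono f) ↔ (∃ g : ΦL ⟶ L', Epi g) :=
  stmt14_general k A A' hselfA F G hG hGe L hL L' hL' ΦL hΦind hΦnp P' hP' hΦ ΨL' hΨind hΨnp Q' hQ'
    hΨ
end

section
/- Let A and A' be finite-dimensional self-injective k-algebras with no simple projective modules, F : A-mod → A'-mod a k-linear functor preserving projectives inducing a stable equivalence, {L_i}_{i∈I} and {L'_j}_{j∈J} complete sets of simple modules, and for each i let J_i = { j ∈ J : L'_j is a quotient of Φ(L_i) }, where Φ(L_i) is the non-projective part of F(L_i). Then J = ∪_{i∈I} J_i. -/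
/-!
The stable equivalence `G` is essentially surjective, so `L'` is stably isomorphic to `F N` for
some `A`-module `N`. Over a noetherian self-injective ring direct sums of injective modules, hence
projective modules, are injective; by Zorn's lemma every module therefore splits as `N₀ ⊕ E` with
`E` projective and `N₀` without nonzero projective submodules. The inclusion of a simple submodule
`L ⊆ N₀` does not factor through a projective module: by Fitting's lemma such a factorisation
would be injective on a projective direct summand containing the image of `L`, whose image in
`N₀` would be a nonzero projective submodule. Transporting along `G` gives a stably nonzero map
`F L ⟶ L'`. Splitting `F L = Φ(L) ⊕ P'` in the same way, its restriction to `Φ(L)` is nonzero,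
hence onto the simple module `L'`. Finally, every stable endomorphism of `F L` is, like one of
`L`, zero or invertible, so any decomposition of `Φ(L)` has a stably zero, i.e. projective,
summand, which must vanish.
-/

open CategoryTheory

open Limits

def NoProjectiveSubmodule (R X : Type) [Ring R] [AddCommGroup X] [Module R X] : Prop :=
  ∀ Q : Submodule R X, Module.Projective R Q → Q = ⊥

section ModuleTheory

variable {R : Type} [Ring R]

instance Module.Injective.dfinsupp [IsNoetherianRing R] {ι : Type} {M : ι → Type}
    [∀ i, AddCommGroup (M i)] [∀ i, Module R (M i)] [∀ i, Module.Injective R (M i)] :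
    Module.Injective R (Π₀ i, M i) := by
  classical
  refine Module.Baer.injective fun I g ↦ ?_
  obtain ⟨S, hS⟩ := Module.Finite.fg_top (R := R) (M := I)
  -- `I` is finitely generated, so `g` takes values in finitely many summands
  set t : Finset ι := S.biUnion fun y ↦ (g y).support
  have hg : ∀ y, ∀ j ∉ t, g y j = 0 := fun y j hj ↦ by
    have : DFinsupp.lapply j ∘ₗ g = 0 := LinearMap.ext_on hS fun y hy ↦ by
      simpa [t] using fun h ↦ hj (Finset.mem_biUnion.mpr ⟨y, hy, h⟩)
    exact LinearMap.congr_fun this y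
  obtain ⟨h, hh⟩ := Module.Injective.extension_property R (∀ j : (t : Set ι), M j) I R
    I.subtype Subtype.val_injective (LinearMap.pi fun j ↦ DFinsupp.lapply j.1 ∘ₗ g)
  refine ⟨DFinsupp.lmk t ∘ₗ h, fun x hx ↦ DFinsupp.ext fun j ↦ ?_⟩
  have hx' := LinearMap.congr_fun hh ⟨x, hx⟩
  simp only [LinearMap.comp_apply, Submodule.subtype_apply] at hx'
  by_cases hj : j ∈ t
  · simp [DFinsupp.lmk, DFinsupp.mk_apply, hj, hx']
  · simp [DFinsupp.lmk, DFinsupp.mk_apply, hj, hg _ j hj]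

theorem Module.Injective.of_retract {M N : Type} [AddCommGroup M] [Module R M] [AddCommGroup N]
    [Module R N] [Module.Injective R N] (i : M →ₗ[R] N) (r : N →ₗ[R] M) (h : r ∘ₗ i = .id) :
    Module.Injective R M :=
  Module.Baer.injective fun I g ↦ by
    obtain ⟨g', hg'⟩ := Module.Injective.extension_property R N I R I.subtype
      Subtype.val_injective (i ∘ₗ g)
    exact ⟨r ∘ₗ g', fun x hx ↦ by
      simpa using congr(r ($hg' ⟨x, hx⟩)).trans congr($h (g ⟨x, hx⟩))⟩

theorem Module.Injective.of_projective [IsNoetherianRing R] [Module.Injective R R]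
    (P : Type) [AddCommGroup P] [Module R P] [Module.Projective R P] : Module.Injective R P := by
  classical
  obtain ⟨s, hs⟩ := Module.projective_def'.mp ‹Module.Projective R P›
  have : Module.Injective R (P →₀ R) :=
    .of_retract (finsuppLequivDFinsupp R).toLinearMap (finsuppLequivDFinsupp R).symm.toLinearMap
      (by ext; simp)
  exact .of_retract s _ hs

theorem Submodule.exists_isCompl_of_injective {X : Type} [AddCommGroup X] [Module R X]
    (E : Submodule R X) [Module.Injective R E] : ∃ Y : Submodule R X, IsCompl Y E := by
  obtain ⟨r, hr⟩ := Module.Injective.extension_property R E E X E.subtype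
    Subtype.val_injective .id
  exact ⟨_, (LinearMap.isCompl_of_proj (f := r) fun x ↦ LinearMap.congr_fun hr x).symm⟩

theorem sSupIndep.insert {α : Type*} [CompleteLattice α] [IsModularLattice α] {s : Set α} {a : α}
    (hs : sSupIndep s) (ha : Disjoint a (sSup s)) : sSupIndep (insert a s) := by
  intro x hx
  by_cases hxa : x = a
  · subst hxa
    exact ha.mono_right (sSup_le_sSup fun y hy ↦ (hy.1.resolve_left hy.2))
  · have hxs : x ∈ s := hx.resolve_left hxa
    rw [Set.insert_sdiff_of_notMem s fun h ↦ hxa (Set.mem_singleton_iff.mp h).symm, sSup_insert,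
      sup_comm]
    exact (hs hxs).disjoint_sup_right_of_disjoint_sup_left
      (ha.symm.mono_left (sup_le (le_sSup hxs) (sSup_le_sSup Set.sdiff_subset)))

theorem exists_isCompl_projective_noProjectiveSubmodule [IsNoetherianRing R]
    [Module.Injective R R] (X : Type) [AddCommGroup X] [Module R X] :
    ∃ Y E : Submodule R X, IsCompl Y E ∧ Module.Projective R E ∧ NoProjectiveSubmodule R Y := by
  classical
  obtain ⟨Fam, hFam⟩ := zorn_subset
    {F : Set (Submodule R X) | sSupIndep F ∧ ∀ Q ∈ F, Module.Projective R Q}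
    fun c hc hchain ↦ ⟨⋃₀ c,
      ⟨iSupIndep_sUnion_of_directed hchain.directedOn fun F hF ↦ (hc hF).1,
        fun Q ⟨F, hF, hQ⟩ ↦ (hc hF).2 Q hQ⟩, fun _ ↦ Set.subset_sUnion_of_mem⟩
  obtain ⟨⟨hind, hproj⟩, hmax⟩ := maximal_subset_iff.mp hFam
  have : ∀ Q : Fam, Module.Projective R Q := fun Q ↦ hproj Q Q.2
  have : ∀ Q : Fam, Module.Injective R Q := fun Q ↦ .of_projective Q
  let e : (Π₀ Q : Fam, (Q : Submodule R X)) ≃ₗ[R] ↥(sSup Fam) :=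
    (LinearEquiv.ofInjective _ ((sSupIndep_iff Fam).mp hind).dfinsupp_lsum_injective).trans
      (.ofEq _ _ (by rw [sSup_eq_iSup', Submodule.iSup_eq_range_dfinsupp_lsum]))
  have : Module.Injective R ↥(sSup Fam) :=
    .of_retract e.symm.toLinearMap e.toLinearMap (by ext; simp)
  obtain ⟨Y, hY⟩ := (sSup Fam).exists_isCompl_of_injective
  refine ⟨Y, sSup Fam, hY, .of_equiv e, fun Q hQ ↦ ?_⟩
  -- a nonzero projective `Q ≤ Y` could be added to the maximal family
  let Q' := Q.map Y.subtype
  have hQ' : Module.Projective R Q' := .of_equiv (Q.equivMapOfInjective _ Y.injective_subtype)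
  have hdisj : Disjoint Q' (sSup Fam) := hY.disjoint.mono_left (Submodule.map_subtype_le _ _)
  have hmem : Q' ∈ Fam := by
    rw [hmax ⟨hind.insert hdisj, Set.forall_mem_insert.mpr ⟨hQ', hproj⟩⟩ (Set.subset_insert _ _)]
    exact Set.mem_insert _ _
  have hQ'0 : Q' = ⊥ := disjoint_self.mp (hdisj.mono_right (le_sSup hmem))
  exact Submodule.map_injective_of_injective Y.injective_subtype
    (hQ'0.trans (Submodule.map_bot _).symm)

theorem Module.Projective.exists_finite_free_factorization {M P : Type} [AddCommGroup M]
    [Module R M] [Module.Finite R M] [AddCommGroup P] [Module R P] [Module.Projective R P]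
    (α : M →ₗ[R] P) :
    ∃ (t : Finset P) (a : M →ₗ[R] (t → R)) (b : (t → R) →ₗ[R] P), b ∘ₗ a = α := by
  classical
  obtain ⟨s, hs⟩ := Module.projective_def'.mp ‹Module.Projective R P›
  obtain ⟨S, hS⟩ := (Module.Finite.fg_top (R := R) (M := M)).map (s ∘ₗ α)
  let t := S.biUnion (·.support)
  have hsupp (m : M) : s (α m) ∈ Finsupp.supported R R (t : Set P) := by
    have := Finsupp.span_le_supported_biUnion_support (R := R) (S : Set (P →₀ R))
    rw [hS] at this
    simpa [t] using this ⟨m, trivial, rfl⟩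
  refine ⟨t, LinearMap.pi fun j ↦ Finsupp.lapply j.1 ∘ₗ s ∘ₗ α,
    Fintype.linearCombination R fun j : t ↦ (j : P), LinearMap.ext fun m ↦ ?_⟩
  calc _ = ∑ j ∈ t, s (α m) j • j := by
        simpa [Fintype.linearCombination_apply] using Finset.sum_attach t fun j ↦ s (α m) j • j
    _ = Finsupp.linearCombination R id (s (α m)) :=
        (Finsupp.linearCombination_apply_of_mem_supported R (hsupp m)).symm
    _ = α m := LinearMap.congr_fun hs (α m)

theorem exists_projective_submodule_of_comp_eq {M N P : Type} [AddCommGroup M] [Module R M]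
    [AddCommGroup N] [Module R N] [AddCommGroup P] [Module R P] [Module.Injective R P]
    [Module.Projective R P] [IsArtinian R P] [IsNoetherian R P] {ι : M →ₗ[R] N}
    (hι : Function.Injective ι) (α : M →ₗ[R] P) (β : P →ₗ[R] N) (h : β ∘ₗ α = ι) :
    ∃ Q : Submodule R N, Module.Projective R Q ∧ LinearMap.range ι ≤ Q := by
  obtain ⟨γ, hγ⟩ := Module.Injective.extension_property R P M N ι hι α
  -- `f` fixes the image of `α`; on the Fitting summand `H` it is invertible, so `β` is injective
  let f : Module.End R P := γ ∘ₗ β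
  obtain ⟨n, hn⟩ := Filter.eventually_atTop.mp f.eventually_isCompl_ker_pow_range_pow
  let H := LinearMap.range (f ^ (n + 1))
  have hfα (m : M) : f (α m) = α m := by
    simpa [f, ← h] using LinearMap.congr_fun hγ m
  have hαH (m : M) : α m ∈ H :=
    ⟨α m, by rw [Module.End.pow_apply, Function.iterate_fixed (hfα m)]⟩
  have hβH : Function.Injective (β ∘ₗ H.subtype) := by
    rw [← LinearMap.ker_eq_bot, eq_bot_iff]
    rintro ⟨x, hx⟩ hβx
    have hfx : f x = 0 := by simpa [f] using congr(γ $hβx)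
    have hx0 : x ∈ LinearMap.ker (f ^ (n + 1)) := by
      rw [LinearMap.mem_ker, pow_succ, Module.End.mul_apply, hfx, map_zero]
    exact Subtype.ext ((Submodule.disjoint_def.mp (hn _ n.le_succ).disjoint) x hx0 hx)
  have : Module.Projective R H :=
    .of_split H.subtype (H.projectionOnto _ (hn _ n.le_succ).symm)
      (LinearMap.ext fun x ↦ Submodule.projectionOnto_apply_left _ x)
  refine ⟨LinearMap.range (β ∘ₗ H.subtype), .of_equiv (LinearEquiv.ofInjective _ hβH), ?_⟩
  rintro _ ⟨m, rfl⟩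
  exact ⟨⟨α m, hαH m⟩, by simp [← h]⟩

theorem NoProjectiveSubmodule.subsingleton_of_comp_eq [IsArtinianRing R] [IsNoetherianRing R]
    [Module.Injective R R] {M N P : Type} [AddCommGroup M] [Module R M] [Module.Finite R M]
    [AddCommGroup N] [Module R N] [AddCommGroup P] [Module R P] [Module.Projective R P]
    (hN : NoProjectiveSubmodule R N) {ι : M →ₗ[R] N} (hι : Function.Injective ι)
    (α : M →ₗ[R] P) (β : P →ₗ[R] N) (h : β ∘ₗ α = ι) : Subsingleton M := by
  obtain ⟨t, a, b, rfl⟩ := Module.Projective.exists_finite_free_factorization α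
  obtain ⟨Q, hQ, hιQ⟩ := exists_projective_submodule_of_comp_eq hι a (β ∘ₗ b) h
  have hι0 : LinearMap.range ι = ⊥ := le_bot_iff.mp (hN Q hQ ▸ hιQ)
  exact ⟨fun x y ↦ hι (by simp [LinearMap.range_eq_bot.mp hι0])⟩

theorem exists_isSimpleModule_submodule [IsArtinianRing R] {X : Type} [AddCommGroup X]
    [Module R X] [Nontrivial X] : ∃ S : Submodule R X, IsSimpleModule R S := by
  obtain ⟨x, hx⟩ := exists_ne (0 : X)
  obtain ⟨S, hS⟩ := (eq_bot_or_exists_atom_le (⊤ : Submodule R (R ∙ x))).resolve_left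
    (by simpa [Submodule.eq_bot_iff] using ⟨x, Submodule.mem_span_singleton_self x, hx⟩)
  have := isSimpleModule_iff_isAtom.mpr hS.1
  exact ⟨_, .congr (S.equivMapOfInjective _ (R ∙ x).injective_subtype).symm⟩

end ModuleTheory

section StableCategory

variable {R : Type} [Ring R]

theorem stableRel_zero_iff {X Y : ModuleCat.{0} R} (f : X ⟶ Y) :
    stableRel R f 0 ↔
      ∃ (P : ModuleCat.{0} R) (α : X ⟶ P) (β : P ⟶ Y), Projective P ∧ f = α ≫ β := by
  simp only [stableRel, zero_add]

theorem stableRel_add {X Y : ModuleCat.{0} R} {f₁ f₂ g₁ g₂ : X ⟶ Y} (hf : stableRel R f₁ f₂)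
    (hg : stableRel R g₁ g₂) : stableRel R (f₁ + g₁) (f₂ + g₂) := by
  obtain ⟨P₁, α₁, β₁, hP₁, rfl⟩ := hf
  obtain ⟨P₂, α₂, β₂, hP₂, rfl⟩ := hg
  exact ⟨P₁ ⊞ P₂, biprod.lift α₁ α₂, biprod.desc β₁ β₂, inferInstance, by simp; abel⟩

instance inst_s15 : Congruence (stableRel R) where
  equivalence :=
    { refl f := ⟨ModuleCat.of R PUnit, 0, 0, inferInstance, by simp⟩
      symm := by
        rintro f g ⟨P, α, β, hP, rfl⟩
        exact ⟨P, α, -β, hP, by simp⟩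
      trans := by
        rintro f g h ⟨P₁, α₁, β₁, hP₁, rfl⟩ ⟨P₂, α₂, β₂, hP₂, rfl⟩
        exact ⟨P₂ ⊞ P₁, biprod.lift α₂ α₁, biprod.desc β₂ β₁, inferInstance, by simp [add_assoc]⟩ }
  comp_left := by
    rintro X Y Z f g g' ⟨P, α, β, hP, rfl⟩
    exact ⟨P, f ≫ α, β, hP, by simp⟩
  comp_right := by
    rintro X Y Z f f' g ⟨P, α, β, hP, rfl⟩
    exact ⟨P, α, β ≫ g, hP, by simp⟩

instance : Preadditive (Quotient (stableRel R)) :=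
  Quotient.preadditive _ fun _ _ _ _ _ _ ↦ stableRel_add

instance : (Quotient.functor (stableRel R)).Additive :=
  Quotient.functor_additive _ fun _ _ _ _ _ _ ↦ stableRel_add

theorem stable_map_eq_zero_iff {X Y : ModuleCat.{0} R} (f : X ⟶ Y) :
    (Quotient.functor (stableRel R)).map f = 0 ↔ stableRel R f 0 := by
  rw [← Functor.map_zero, Quotient.functor_map_eq_iff]

theorem projective_iff_stable_map_id_eq_zero {X : ModuleCat.{0} R} :
    Projective X ↔ (Quotient.functor (stableRel R)).map (𝟙 X) = 0 := by
  rw [stable_map_eq_zero_iff, stableRel_zero_iff]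
  refine ⟨fun hX ↦ ⟨X, 𝟙 X, 𝟙 X, hX, by simp⟩, fun ⟨P, α, β, hP, h⟩ ↦ ?_⟩
  exact Retract.projective ⟨α, β, h.symm⟩

theorem isZero_stable_obj_iff {X : ModuleCat.{0} R} :
    IsZero ((Quotient.functor (stableRel R)).obj X) ↔ Projective X := by
  rw [IsZero.iff_id_eq_zero, ← (Quotient.functor _).map_id, projective_iff_stable_map_id_eq_zero]

end StableCategory

section Decomposition

variable {R : Type} [Ring R]

theorem NoProjectiveSubmodule.isZero_of_mono {Y Z : ModuleCat.{0} R}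
    (hY : NoProjectiveSubmodule R Y) (m : Z ⟶ Y) [Mono m] [Projective Z] : IsZero Z := by
  have hm := (ModuleCat.mono_iff_injective m).mp ‹_›
  have hm0 := LinearMap.range_eq_bot.mp (hY _ (.of_equiv (LinearEquiv.ofInjective m.hom hm)))
  have : Subsingleton Z := ⟨fun x y ↦ hm (by simp [hm0])⟩
  exact ModuleCat.isZero_of_subsingleton Z

theorem ModuleCat.exists_iso_biprod_projective [IsNoetherianRing R] [Module.Injective R R]
    (X : ModuleCat.{0} R) : ∃ Y P : ModuleCat.{0} R,
      NoProjectiveSubmodule R Y ∧ Projective P ∧ Nonempty (X ≅ Y ⊞ P) := by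
  obtain ⟨Y, E, hYE, hE, hY⟩ := exists_isCompl_projective_noProjectiveSubmodule (R := R) X
  exact ⟨.of R Y, .of R E, hY, inferInstance,
    ⟨(Submodule.prodEquivOfIsCompl Y E hYE).toModuleIso.symm ≪≫
      (biprodIsoProd (.of R Y) (.of R E)).symm⟩⟩

theorem exists_simple_stable_map_ne_zero [IsArtinianRing R] [IsNoetherianRing R]
    [Module.Injective R R] {N : ModuleCat.{0} R} (hN : ¬ Projective N) :
    ∃ (L : ModuleCat.{0} R) (_ : Simple L) (ι : L ⟶ N),
      (Quotient.functor (stableRel R)).map ι ≠ 0 := by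
  obtain ⟨Y, E, hYE, hE, hY⟩ := exists_isCompl_projective_noProjectiveSubmodule (R := R) N
  have : Nontrivial Y := by
    refine Submodule.nontrivial_iff_ne_bot.mpr fun hY0 ↦ hN ?_
    have : Module.Projective R N :=
      .of_equiv (LinearEquiv.ofTop E (eq_top_of_isCompl_bot (hY0 ▸ hYE).symm))
    infer_instance
  obtain ⟨S, hS⟩ := exists_isSimpleModule_submodule (R := R) (X := Y)
  refine ⟨.of R S, simple_iff_isSimpleModule.mpr hS, ModuleCat.ofHom (Y.subtype ∘ₗ S.subtype),
    fun h ↦ ?_⟩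
  obtain ⟨P, α, β, hP, h⟩ := (stableRel_zero_iff _).mp ((stable_map_eq_zero_iff _).mp h)
  have := IsSimpleModule.nontrivial R S
  refine not_subsingleton S (hY.subsingleton_of_comp_eq S.injective_subtype α.hom
    (Y.projectionOnto E hYE ∘ₗ β.hom) (LinearMap.ext fun x ↦ by
      have hx : β (α x) = Y.subtype (S.subtype x) := congr($h.symm x)
      simp [hx, Submodule.projectionOnto_apply_left]))

end Decomposition

section Indecomposable

variable {R : Type} [Ring R]

theorem projective_or_projective_of_iso_biprod {X U V : ModuleCat.{0} R}
    (hX : ∀ u : (Quotient.functor (stableRel R)).obj X ⟶ (Quotient.functor (stableRel R)).obj X,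
      u = 0 ∨ IsIso u)
    (i : X ≅ U ⊞ V) : Projective U ∨ Projective V := by
  simp only [projective_iff_stable_map_id_eq_zero]
  set Q := Quotient.functor (stableRel R)
  let e : X ⟶ X := i.hom ≫ biprod.fst ≫ biprod.inl ≫ i.inv
  have he : Q.map e ≫ Q.map e = Q.map e := by rw [← Q.map_comp]; simp [e]
  rcases hX (Q.map e) with h | h
  · left
    calc Q.map (𝟙 U) = Q.map (biprod.inl ≫ i.inv) ≫ Q.map e ≫ Q.map (i.hom ≫ biprod.fst) := by
          rw [← Q.map_comp, ← Q.map_comp]; congr 1; simp [e]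
      _ = 0 := by rw [h, zero_comp, comp_zero]
  · right
    have h1 : Q.map e = 𝟙 _ := (cancel_epi (Q.map e)).mp (by rw [he, Category.comp_id])
    calc Q.map (𝟙 V) = Q.map (biprod.inr ≫ i.inv) ≫ Q.map e ≫ Q.map (i.hom ≫ biprod.snd) := by
          rw [h1, Category.id_comp, ← Q.map_comp]; congr 1; simp
      _ = 0 := by rw [← Q.map_comp, ← Q.map_comp, ← Q.map_zero]; congr 1; simp [e]

theorem indec_of_iso_biprod {X Y P : ModuleCat.{0} R} [Projective P]
    (hX : ∀ u : (Quotient.functor (stableRel R)).obj X ⟶ (Quotient.functor (stableRel R)).obj X,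
      u = 0 ∨ IsIso u)
    (hY : NoProjectiveSubmodule R Y) (hY0 : ¬ IsZero Y) (i : X ≅ Y ⊞ P) : Indec Y := by
  refine ⟨hY0, fun Y₁ Z ⟨j⟩ ↦ ?_⟩
  rcases projective_or_projective_of_iso_biprod hX
    (i ≪≫ biprod.mapIso j (Iso.refl P) ≪≫ biprod.associator Y₁ Z P) with h | h
  · exact .inl (hY.isZero_of_mono (biprod.inl ≫ j.inv))
  · have : Projective Z := Retract.projective (Y := Z ⊞ P) ⟨biprod.inl, biprod.fst, by simp⟩
    exact .inr (hY.isZero_of_mono (biprod.inr ≫ j.inv))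

theorem exists_ne_zero_of_iso_biprod_projective {X Y P L' : ModuleCat.{0} R} [Projective P]
    (i : X ≅ Y ⊞ P) (w : X ⟶ L') (hw : (Quotient.functor (stableRel R)).map w ≠ 0) :
    ∃ g : Y ⟶ L', g ≠ 0 := by
  refine ⟨biprod.inl ≫ i.inv ≫ w, fun hg ↦ hw ?_⟩
  rw [stable_map_eq_zero_iff, stableRel_zero_iff]
  refine ⟨P, i.hom ≫ biprod.snd, biprod.inr ≫ i.inv ≫ w, inferInstance, ?_⟩
  rw [← cancel_epi i.inv]
  apply biprod.hom_ext' <;> simp [hg]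

end Indecomposable

section StableEquivalence

variable {A A' : Type} [Ring A] [Ring A'] {F : ModuleCat.{0} A ⥤ ModuleCat.{0} A'}
  {G : Quotient (stableRel A) ⥤ Quotient (stableRel A')}

theorem stable_endo_eq_zero_or_isIso [G.Full]
    (hG : Quotient.functor (stableRel A) ⋙ G = F ⋙ Quotient.functor (stableRel A'))
    (L : ModuleCat.{0} A) [Simple L]
    (u : (Quotient.functor (stableRel A')).obj (F.obj L) ⟶
      (Quotient.functor (stableRel A')).obj (F.obj L)) :
    u = 0 ∨ IsIso u := by
  let φ := eqToIso (Functor.congr_obj hG L)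
  obtain ⟨v, hv⟩ := G.map_surjective (φ.hom ≫ u ≫ φ.inv)
  obtain ⟨g, rfl⟩ := (Quotient.functor (stableRel A)).map_surjective v
  have hu : u = φ.inv ≫ G.map ((Quotient.functor (stableRel A)).map g) ≫ φ.hom := by simp [hv]
  by_cases hg : g = 0
  · left
    simp [hu, hg]
  · right
    have := isIso_of_hom_simple hg
    rw [hu]
    infer_instance

theorem exists_simple_stable_map_ne_zero_of_isEquivalence [G.IsEquivalence] [IsArtinianRing A]
    [IsNoetherianRing A] [Module.Injective A A]
    (hG : Quotient.functor (stableRel A) ⋙ G = F ⋙ Quotient.functor (stableRel A'))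
    {L' : ModuleCat.{0} A'} (hL' : ¬ Projective L') :
    ∃ (L : ModuleCat.{0} A) (_ : Simple L) (w : F.obj L ⟶ L'),
      (Quotient.functor (stableRel A')).map w ≠ 0 := by
  let φ := G.objObjPreimageIso ((Quotient.functor (stableRel A')).obj L')
  have hN : ¬ Projective (G.objPreimage ((Quotient.functor (stableRel A')).obj L')).as :=
    fun h ↦ hL' (isZero_stable_obj_iff.mp
      ((G.map_isZero (isZero_stable_obj_iff.mpr h)).of_iso φ.symm))
  obtain ⟨L, hL, ι, hι⟩ := exists_simple_stable_map_ne_zero hN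
  obtain ⟨w, hw⟩ := (Quotient.functor (stableRel A')).map_surjective
    ((eqToIso (Functor.congr_obj hG L)).inv ≫ G.map ((Quotient.functor (stableRel A)).map ι) ≫
      φ.hom)
  refine ⟨L, hL, w, fun h0 ↦ hι ?_⟩
  rw [← G.map_eq_zero_iff]
  simpa [hw] using h0

end StableEquivalence

theorem stmt15_general (k : Type) [Field k]
    (A A' : Type) [Ring A] [Ring A'] [Algebra k A] [Algebra k A']
    [FiniteDimensional k A] [FiniteDimensional k A']
    (hselfA : Module.Injective A A) (hselfA' : Module.Injective A' A')
    (hnspA' : ∀ S : ModuleCat.{0} A', Simple S → ¬ Projective S)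
    (F : ModuleCat.{0} A ⥤ ModuleCat.{0} A')
    (G : Quotient (stableRel A) ⥤ Quotient (stableRel A'))
    (hG : Quotient.functor (stableRel A) ⋙ G = F ⋙ Quotient.functor (stableRel A'))
    (hGe : G.IsEquivalence) :
    ∀ L' : ModuleCat.{0} A', Simple L' →
      ∃ L : ModuleCat.{0} A, Simple L ∧
        ∃ (ΦL P' : ModuleCat.{0} A'), Indec ΦL ∧ ¬ Projective ΦL ∧ Projective P' ∧
          Nonempty (F.obj L ≅ ΦL ⊞ P') ∧ ∃ g : ΦL ⟶ L', Epi g := by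
  intro L' hL'
  have := IsArtinianRing.of_finite k A
  have := IsNoetherianRing.of_finite k A
  have := IsNoetherianRing.of_finite k A'
  obtain ⟨L, hL, w, hw⟩ := exists_simple_stable_map_ne_zero_of_isEquivalence hG (hnspA' L' hL')
  obtain ⟨Y, P, hY, hP, ⟨i⟩⟩ := ModuleCat.exists_iso_biprod_projective (F.obj L)
  obtain ⟨g, hg⟩ := exists_ne_zero_of_iso_biprod_projective i w hw
  have hY0 : ¬ IsZero Y := fun h ↦ hg (h.eq_of_src _ _)
  exact ⟨L, hL, Y, P, indec_of_iso_biprod (stable_endo_eq_zero_or_isIso hG L) hY hY0 i,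
    fun _ ↦ hY0 (hY.isZero_of_mono (𝟙 Y)), hP, ⟨i⟩, g, epi_of_nonzero_to_simple hg⟩

/-- In the situation of a stable equivalence induced by a `k`-linear
functor `F` preserving projectives between module categories of finite-dimensional
self-injective `k`-algebras without simple projectives, every simple `A'`-module `L'`
is a quotient of `Φ(L)` for some simple `A`-module `L`, where `Φ(L)` is the
non-projective part of `F L`; i.e. `J = ⋃_{i ∈ I} J_i`. -/
theorem stmt15 (k : Type) [Field k]
    (A A' : Type) [Ring A] [Ring A'] [Algebra k A] [Algebra k A']
    [FiniteDimensional k A] [FiniteDimensional k A']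
    (hselfA : Module.Injective A A) (hselfA' : Module.Injective A' A')
    (hnspA : ∀ S : ModuleCat.{0} A, Simple S → ¬ Projective S)
    (hnspA' : ∀ S : ModuleCat.{0} A', Simple S → ¬ Projective S)
    (F : ModuleCat.{0} A ⥤ ModuleCat.{0} A') [F.Additive] [F.Linear k]
    (hproj : ∀ P : ModuleCat.{0} A, Projective P → Projective (F.obj P))
    (G : Quotient (stableRel A) ⥤ Quotient (stableRel A'))
    (hG : Quotient.functor (stableRel A) ⋙ G = F ⋙ Quotient.functor (stableRel A'))
    (hGe : G.IsEquivalence) :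
    ∀ L' : ModuleCat.{0} A', Simple L' →
      ∃ L : ModuleCat.{0} A, Simple L ∧
        ∃ (ΦL P' : ModuleCat.{0} A'), Indec ΦL ∧ ¬ Projective ΦL ∧ Projective P' ∧
          Nonempty (F.obj L ≅ ΦL ⊞ P') ∧ ∃ g : ΦL ⟶ L', Epi g :=
  stmt15_general k A A' hselfA hselfA' hnspA' F G hG hGe
end
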